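/- Let $G_1 \cong \mathbb{Z}/2^{s_1}t_1\mathbb{Z} \oplus \mathbb{Z}/2^{r_1}w_1\mathbb{Z}$ and $G_2 \cong \mathbb{Z}/2^{s_2}t_2\mathbb{Z} \oplus \mathbb{Z}/2^{r_2}w_2\mathbb{Z}$ with all $t_i, w_i$ odd, $s_i \leq r_i$, and $r_1 \geq 1$. Then the proportion of pairs $(P_1, P_2) \in G_1 \times G_2$ with $\nu_2(\mathrm{ord}(P_1)) = \nu_2(\mathrm{ord}(P_2))$ is at most $5/8$, with the maximum $5/8$ attained when $s_1 = r_1 = s_2 = r_2 = 1$. -/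

import Mathlib

/-!
For odd `t`, `w`, an element `x` of `ℤ/2^s t × ℤ/2^r w` has `ν₂(ord x) ≤ k` iff `2^k t w • x = 0`,
so there are `t w 2^(min k s + min k r)` of them; differencing in `k` gives the distribution
`h(s, r)` of `ν₂ ∘ ord`. The proportion of pairs with equal valuation is the dot product
`h(s₁, r₁) · h(s₂, r₂)`, so by Cauchy–Schwarz it suffices that `‖h(s, r)‖² ≤ 5/8` for `r ≥ 1`.
This holds with equality at `s = r = 1`, and survives raising `r` (or `s = r` together) by one:
the normalisation `4^(s+r)` grows by a factor `4` (or `16`) while only one coordinate is added.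
If `r₂ = 0` then `h(s₂, r₂)` is the first unit vector and the dot product is `2^-(s₁+r₁) ≤ 1/2`.
-/

open Finset

lemma gcd_pow_pow_eq_pow_min (p a b : ℕ) : (p ^ a).gcd (p ^ b) = p ^ min a b := by
  rcases le_total a b with h | h
  · rw [min_eq_left h, Nat.gcd_eq_left (pow_dvd_pow p h)]
  · rw [min_eq_right h, Nat.gcd_eq_right (pow_dvd_pow p h)]

lemma factorization_le_iff_dvd_pow_mul {p d m a k : ℕ} (hp : p.Prime) (hm : p.Coprime m)
    (hd : d ∣ p ^ a * m) : d.factorization p ≤ k ↔ d ∣ p ^ k * m := by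
  have hd0 : d ≠ 0 := by
    rintro rfl
    have hm0 : m ≠ 0 := by rintro rfl; exact hp.ne_one (Nat.coprime_zero_right p |>.mp hm)
    exact mul_ne_zero (pow_ne_zero a hp.ne_zero) hm0 (zero_dvd_iff.mp hd)
  constructor
  · intro h
    rw [← Nat.ordProj_mul_ordCompl_eq_self d p]
    refine mul_dvd_mul (pow_dvd_pow p h) ?_
    exact ((Nat.coprime_ordCompl hp hd0).pow_left a).symm.dvd_of_dvd_mul_left
      ((Nat.ordCompl_dvd d p).trans hd)
  · intro h
    have hv : p ^ d.factorization p ∣ p ^ k * m := (Nat.ordProj_dvd d p).trans h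
    exact (Nat.pow_dvd_pow_iff_le_right hp.one_lt).1 ((hm.pow_left _).dvd_of_dvd_mul_right hv)

lemma factorization_addOrderOf_le_iff {G : Type*} [AddGroup G] {p m a k : ℕ} (hp : p.Prime)
    (hm : p.Coprime m) (hG : Nat.card G ∣ p ^ a * m) (x : G) :
    (addOrderOf x).factorization p ≤ k ↔ (p ^ k * m) • x = 0 := by
  rw [factorization_le_iff_dvd_pow_mul hp hm ((addOrderOf_dvd_natCard x).trans hG),
    addOrderOf_dvd_iff_nsmul_eq_zero]

lemma card_filter_nsmul_eq_zero_zmod (n c : ℕ) [NeZero n] :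
    #{x : ZMod n | c • x = 0} = n.gcd c := by
  have h := IsAddCyclic.card_nsmulAddMonoidHom_ker (ZMod n) c
  rw [Nat.card_zmod] at h
  rw [← h, ← Fintype.card_subtype, ← Nat.card_eq_fintype_card]
  rfl

lemma card_filter_nsmul_eq_zero_zmod_prod (n m c : ℕ) [NeZero n] [NeZero m] :
    #{x : ZMod n × ZMod m | c • x = 0} = n.gcd c * m.gcd c := by
  rw [← card_filter_nsmul_eq_zero_zmod, ← card_filter_nsmul_eq_zero_zmod, ← card_product,
    ← filter_product, univ_product_univ]
  simp only [Prod.ext_iff, Prod.smul_fst, Prod.smul_snd, Prod.fst_zero, Prod.snd_zero]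

lemma card_filter_eq_add_card_filter_le {α : Type*} (s : Finset α) (f : α → ℕ) (k : ℕ) :
    #{a ∈ s | f a = k + 1} + #{a ∈ s | f a ≤ k} = #{a ∈ s | f a ≤ k + 1} := by
  classical
  rw [← card_union_of_disjoint (disjoint_filter.2 fun _ _ h => by omega), ← filter_or]
  congr 1
  ext a
  simp only [mem_filter, and_congr_right_iff]
  omega

lemma card_filter_fst_eq_snd {α β : Type*} [Fintype α] [Fintype β] (f : α → ℕ) (g : β → ℕ)
    {N : ℕ} (hf : ∀ a, f a < N) :
    #{p : α × β | f p.1 = g p.2} = ∑ k ∈ range N, #{a | f a = k} * #{b | g b = k} := by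
  rw [card_eq_sum_card_fiberwise (f := fun p => f p.1) (t := range N)
    fun p _ => mem_range.2 (hf p.1)]
  refine sum_congr rfl fun k _ => ?_
  rw [← card_product, ← filter_product, univ_product_univ, filter_filter]
  congr 1
  ext p
  simp only [mem_filter, mem_univ, true_and]
  exact ⟨fun h => ⟨h.2, h.1.symm.trans h.2⟩, fun h => ⟨h.1.trans h.2.symm, h.1⟩⟩

lemma gcd_two_pow_mul_odd (s k : ℕ) {t w : ℕ} (hw : Odd w) :
    (2 ^ s * t).gcd (2 ^ k * (t * w)) = 2 ^ min s k * t := by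
  rw [show 2 ^ k * (t * w) = 2 ^ k * w * t by ring, Nat.gcd_mul_right,
    Nat.Coprime.gcd_mul_right_cancel_right _ ((Nat.coprime_two_left.2 hw).pow_left s).symm,
    gcd_pow_pow_eq_pow_min]

/-- `valCount s r k / 2 ^ (s + r)` is the `k`-th coordinate of `h(s, r)`, and
`valCountLE s r k / 2 ^ (s + r)` the sum of its coordinates up to `k`. -/
def valCountLE (s r k : ℕ) : ℕ := 2 ^ (min k s + min k r)

def valCount (s r : ℕ) : ℕ → ℕ
  | 0 => 1
  | k + 1 => valCountLE s r (k + 1) - valCountLE s r k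

section ZModProd

variable {s r t w : ℕ}

lemma card_zmod_prod :
    Nat.card (ZMod (2 ^ s * t) × ZMod (2 ^ r * w)) = 2 ^ (s + r) * (t * w) := by
  rw [Nat.card_prod, Nat.card_zmod, Nat.card_zmod, pow_add]
  ring

lemma factorization_addOrderOf_le_iff_zmod_prod (ht : Odd t) (hw : Odd w) (k : ℕ)
    (x : ZMod (2 ^ s * t) × ZMod (2 ^ r * w)) :
    (addOrderOf x).factorization 2 ≤ k ↔ (2 ^ k * (t * w)) • x = 0 :=
  factorization_addOrderOf_le_iff Nat.prime_two (Nat.coprime_two_left.2 (ht.mul hw))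
    card_zmod_prod.dvd x

lemma factorization_addOrderOf_le_zmod_prod (ht : Odd t) (hw : Odd w) (hsr : s ≤ r)
    (x : ZMod (2 ^ s * t) × ZMod (2 ^ r * w)) : (addOrderOf x).factorization 2 ≤ r := by
  have hdvd {n : ℕ} (y : ZMod n) (h : n ∣ 2 ^ r * (t * w)) : (2 ^ r * (t * w)) • y = 0 :=
    addOrderOf_dvd_iff_nsmul_eq_zero.1 ((addOrderOf_dvd_natCard y).trans (by rwa [Nat.card_zmod]))
  rw [factorization_addOrderOf_le_iff_zmod_prod ht hw]
  refine Prod.ext (hdvd _ ?_) (hdvd _ (Dvd.intro_left t (by ring)))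
  exact ⟨2 ^ (r - s) * w, by rw [← Nat.pow_sub_mul_pow 2 hsr]; ring⟩

variable [NeZero t] [NeZero w]

lemma card_factorization_addOrderOf_le (ht : Odd t) (hw : Odd w) (k : ℕ) :
    #{x : ZMod (2 ^ s * t) × ZMod (2 ^ r * w) | (addOrderOf x).factorization 2 ≤ k} =
      t * w * valCountLE s r k := by
  simp_rw [factorization_addOrderOf_le_iff_zmod_prod ht hw]
  rw [card_filter_nsmul_eq_zero_zmod_prod, gcd_two_pow_mul_odd s k hw, mul_comm t w,
    gcd_two_pow_mul_odd r k ht, valCountLE, min_comm k s, min_comm k r, pow_add]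
  ring

lemma card_factorization_addOrderOf_eq (ht : Odd t) (hw : Odd w) (k : ℕ) :
    #{x : ZMod (2 ^ s * t) × ZMod (2 ^ r * w) | (addOrderOf x).factorization 2 = k} =
      t * w * valCount s r k := by
  cases k with
  | zero =>
    simp_rw [← Nat.le_zero]
    rw [card_factorization_addOrderOf_le ht hw]
    simp [valCountLE, valCount]
  | succ k =>
    have h := card_filter_eq_add_card_filter_le univ
      (fun x : ZMod (2 ^ s * t) × ZMod (2 ^ r * w) => (addOrderOf x).factorization 2) k
    rw [card_factorization_addOrderOf_le ht hw, card_factorization_addOrderOf_le ht hw] at h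
    rw [valCount, Nat.mul_sub]
    omega

end ZModProd

lemma valCount_congr {s r s' r' k : ℕ} (hs : min k s = min k s') (hr : min k r = min k r') :
    valCount s r k = valCount s' r' k := by
  cases k with
  | zero => rfl
  | succ k =>
    simp only [valCount, valCountLE]
    rw [hs, hr, show min k s = min k s' by omega, show min k r = min k r' by omega]

lemma valCount_eq_zero_of_lt {s r k : ℕ} (hsr : s ≤ r) (hk : r < k) : valCount s r k = 0 := by
  obtain ⟨k, rfl⟩ : ∃ j, k = j + 1 := ⟨k - 1, by omega⟩
  simp only [valCount, valCountLE]
  rw [min_eq_right (by omega : s ≤ k + 1), min_eq_right (by omega : r ≤ k + 1),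
    min_eq_right (by omega : s ≤ k), min_eq_right (by omega : r ≤ k), Nat.sub_self]

lemma valCount_succ_self_succ (s : ℕ) : valCount (s + 1) (s + 1) (s + 1) = 3 * 4 ^ s := by
  simp only [valCount, valCountLE, min_self, min_eq_left (Nat.le_succ s)]
  rw [show s + 1 + (s + 1) = 2 * (s + 1) by ring, show s + s = 2 * s by ring, pow_mul, pow_mul,
    pow_succ]
  norm_num
  omega

lemma valCount_succ_of_le {s r : ℕ} (hsr : s ≤ r) : valCount s (r + 1) (r + 1) = 2 ^ (s + r) := by
  simp only [valCount, valCountLE, min_self, min_eq_left (Nat.le_succ r),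
    min_eq_right hsr, min_eq_right (hsr.trans (Nat.le_succ r))]
  rw [show s + (r + 1) = s + r + 1 by ring, pow_succ]
  omega

lemma sum_sq_valCount_self_le {s : ℕ} (hs : 1 ≤ s) :
    8 * ∑ k ∈ range (s + 1), valCount s s k ^ 2 ≤ 5 * 4 ^ (s + s) := by
  induction s, hs using Nat.le_induction with
  | base => decide
  | succ s _ ih =>
    have hsum : ∑ k ∈ range (s + 1), valCount (s + 1) (s + 1) k ^ 2 =
        ∑ k ∈ range (s + 1), valCount s s k ^ 2 :=
      sum_congr rfl fun k hk => by
        rw [valCount_congr (s' := s) (r' := s) (by grind) (by grind)]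
    rw [sum_range_succ, hsum, valCount_succ_self_succ]
    have h1 : 4 ^ (s + 1 + (s + 1)) = 16 * 4 ^ (s + s) := by ring
    have h2 : (3 * 4 ^ s) ^ 2 = 9 * 4 ^ (s + s) := by ring
    omega

lemma sum_sq_valCount_le {s r : ℕ} (hsr : s ≤ r) (hr : 1 ≤ r) :
    8 * ∑ k ∈ range (r + 1), valCount s r k ^ 2 ≤ 5 * 4 ^ (s + r) := by
  induction r, max_le hsr hr using Nat.le_induction with
  | base =>
    rcases Nat.eq_zero_or_pos s with rfl | hs
    · decide
    · rw [max_eq_left hs]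
      exact sum_sq_valCount_self_le hs
  | succ r hr' ih =>
    have hsr : s ≤ r := (le_max_left s 1).trans hr'
    have hsum : ∑ k ∈ range (r + 1), valCount s (r + 1) k ^ 2 =
        ∑ k ∈ range (r + 1), valCount s r k ^ 2 :=
      sum_congr rfl fun k hk => by
        rw [valCount_congr (s' := s) (r' := r) rfl (by grind)]
    rw [sum_range_succ, hsum, valCount_succ_of_le hsr]
    have h1 : 4 ^ (s + (r + 1)) = 4 * 4 ^ (s + r) := by ring
    have h2 : (2 ^ (s + r)) ^ 2 = 4 ^ (s + r) := by rw [← pow_mul, mul_comm, pow_mul]; norm_num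
    have := ih hsr ((le_max_right s 1).trans hr')
    omega

lemma sum_range_sq_valCount_le {s r : ℕ} (hsr : s ≤ r) (hr : 1 ≤ r) (N : ℕ) :
    8 * ∑ k ∈ range N, valCount s r k ^ 2 ≤ 5 * 4 ^ (s + r) := by
  have hvanish : ∀ k ≥ r + 1, valCount s r k ^ 2 = 0 := fun k hk => by
    rw [valCount_eq_zero_of_lt hsr hk, zero_pow two_ne_zero]
  calc 8 * ∑ k ∈ range N, valCount s r k ^ 2
      ≤ 8 * ∑ k ∈ range (max N (r + 1)), valCount s r k ^ 2 :=
        Nat.mul_le_mul_left 8 (sum_le_sum_of_subset (range_mono (le_max_left _ _)))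
    _ = 8 * ∑ k ∈ range (r + 1), valCount s r k ^ 2 := by
        rw [eventually_constant_sum hvanish (le_max_right _ _)]
    _ ≤ 5 * 4 ^ (s + r) := sum_sq_valCount_le hsr hr

lemma sum_valCount_mul_le {s₁ r₁ s₂ r₂ : ℕ} (h₁ : s₁ ≤ r₁) (h₂ : s₂ ≤ r₂) (hr₁ : 1 ≤ r₁)
    (N : ℕ) : 8 * ∑ k ∈ range (N + 1), valCount s₁ r₁ k * valCount s₂ r₂ k ≤
      5 * (2 ^ (s₁ + r₁) * 2 ^ (s₂ + r₂)) := by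
  rcases Nat.eq_zero_or_pos r₂ with rfl | hr₂
  · obtain rfl : s₂ = 0 := Nat.le_zero.1 h₂
    have hδ : ∀ k ∈ range (N + 1), k ≠ 0 → valCount s₁ r₁ k * valCount 0 0 k = 0 :=
      fun k _ hk => by rw [valCount_eq_zero_of_lt le_rfl (Nat.pos_of_ne_zero hk), mul_zero]
    rw [sum_eq_single_of_mem 0 (by simp) hδ]
    have : 2 ≤ 2 ^ (s₁ + r₁) := Nat.le_self_pow (by omega) 2
    simp only [valCount]
    omega
  · rw [← Nat.pow_le_pow_iff_left two_ne_zero]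
    calc (8 * ∑ k ∈ range (N + 1), valCount s₁ r₁ k * valCount s₂ r₂ k) ^ 2
        ≤ (8 * ∑ k ∈ range (N + 1), valCount s₁ r₁ k ^ 2) *
            (8 * ∑ k ∈ range (N + 1), valCount s₂ r₂ k ^ 2) := by
          rw [mul_pow, mul_mul_mul_comm, ← sq]
          exact Nat.mul_le_mul_left _ (sum_mul_sq_le_sq_mul_sq _ _ _)
      _ ≤ (5 * 4 ^ (s₁ + r₁)) * (5 * 4 ^ (s₂ + r₂)) :=
          Nat.mul_le_mul (sum_range_sq_valCount_le h₁ hr₁ _) (sum_range_sq_valCount_le h₂ hr₂ _)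
      _ = (5 * (2 ^ (s₁ + r₁) * 2 ^ (s₂ + r₂))) ^ 2 := by
          rw [show (4 : ℕ) = 2 ^ 2 by rfl, ← pow_mul, ← pow_mul]
          ring

lemma card_pairs_factorization_addOrderOf_eq {s₁ r₁ t₁ w₁ s₂ r₂ t₂ w₂ : ℕ}
    [NeZero t₁] [NeZero w₁] [NeZero t₂] [NeZero w₂]
    (ht₁ : Odd t₁) (hw₁ : Odd w₁) (ht₂ : Odd t₂) (hw₂ : Odd w₂) (h₁ : s₁ ≤ r₁) :
    #{P : (ZMod (2 ^ s₁ * t₁) × ZMod (2 ^ r₁ * w₁)) × (ZMod (2 ^ s₂ * t₂) × ZMod (2 ^ r₂ * w₂)) |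
        (addOrderOf P.1).factorization 2 = (addOrderOf P.2).factorization 2} =
      t₁ * w₁ * (t₂ * w₂) * ∑ k ∈ range (r₁ + 1), valCount s₁ r₁ k * valCount s₂ r₂ k := by
  rw [card_filter_fst_eq_snd (fun x => (addOrderOf x).factorization 2)
    (fun y => (addOrderOf y).factorization 2)
    fun x => Nat.lt_succ_of_le (factorization_addOrderOf_le_zmod_prod ht₁ hw₁ h₁ x), mul_sum]
  refine sum_congr rfl fun k _ => ?_
  rw [card_factorization_addOrderOf_eq ht₁ hw₁, card_factorization_addOrderOf_eq ht₂ hw₂]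
  ring

theorem stmt17_general (s₁ r₁ t₁ w₁ s₂ r₂ t₂ w₂ : ℕ)
    (ht₁ : Odd t₁) (hw₁ : Odd w₁) (ht₂ : Odd t₂) (hw₂ : Odd w₂)
    (h₁ : s₁ ≤ r₁) (h₂ : s₂ ≤ r₂) (hr₁ : 1 ≤ r₁) :
    ((Nat.card {P : (ZMod (2 ^ s₁ * t₁) × ZMod (2 ^ r₁ * w₁)) ×
          (ZMod (2 ^ s₂ * t₂) × ZMod (2 ^ r₂ * w₂)) //
        (addOrderOf P.1).factorization 2 = (addOrderOf P.2).factorization 2} : ℚ) /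
      (Nat.card ((ZMod (2 ^ s₁ * t₁) × ZMod (2 ^ r₁ * w₁)) ×
          (ZMod (2 ^ s₂ * t₂) × ZMod (2 ^ r₂ * w₂))) : ℚ)) ≤ 5 / 8 ∧
    (s₁ = 1 ∧ r₁ = 1 ∧ s₂ = 1 ∧ r₂ = 1 →
      ((Nat.card {P : (ZMod (2 ^ s₁ * t₁) × ZMod (2 ^ r₁ * w₁)) ×
            (ZMod (2 ^ s₂ * t₂) × ZMod (2 ^ r₂ * w₂)) //
          (addOrderOf P.1).factorization 2 = (addOrderOf P.2).factorization 2} : ℚ) /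
        (Nat.card ((ZMod (2 ^ s₁ * t₁) × ZMod (2 ^ r₁ * w₁)) ×
            (ZMod (2 ^ s₂ * t₂) × ZMod (2 ^ r₂ * w₂))) : ℚ)) = 5 / 8) := by
  have : NeZero t₁ := ⟨ht₁.pos.ne'⟩
  have : NeZero w₁ := ⟨hw₁.pos.ne'⟩
  have : NeZero t₂ := ⟨ht₂.pos.ne'⟩
  have : NeZero w₂ := ⟨hw₂.pos.ne'⟩
  rw [Nat.card_eq_fintype_card, Fintype.card_subtype, card_pairs_factorization_addOrderOf_eq
    ht₁ hw₁ ht₂ hw₂ h₁, Nat.card_prod, card_zmod_prod, card_zmod_prod,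
    show 2 ^ (s₁ + r₁) * (t₁ * w₁) * (2 ^ (s₂ + r₂) * (t₂ * w₂)) =
      t₁ * w₁ * (t₂ * w₂) * (2 ^ (s₁ + r₁) * 2 ^ (s₂ + r₂)) by ring,
    Nat.cast_mul, Nat.cast_mul (t₁ * w₁ * (t₂ * w₂)),
    mul_div_mul_left _ _ (Nat.cast_ne_zero.2 (NeZero.ne _))]
  refine ⟨?_, ?_⟩
  · rw [div_le_iff₀ (by positivity)]
    have := (Nat.cast_le (α := ℚ)).2 (sum_valCount_mul_le h₁ h₂ hr₁ r₁)
    push_cast at this ⊢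
    linarith
  · rintro ⟨rfl, rfl, rfl, rfl⟩
    norm_num [sum_range_succ, valCount, valCountLE]

theorem stmt17 (s₁ r₁ t₁ w₁ s₂ r₂ t₂ w₂ : ℕ)
    (ht₁ : Odd t₁) (hw₁ : Odd w₁) (ht₂ : Odd t₂) (hw₂ : Odd w₂)
    (ht₁0 : 0 < t₁) (hw₁0 : 0 < w₁) (ht₂0 : 0 < t₂) (hw₂0 : 0 < w₂)
    (h₁ : s₁ ≤ r₁) (h₂ : s₂ ≤ r₂) (hr₁ : 1 ≤ r₁) :
    ((Nat.card {P : (ZMod (2 ^ s₁ * t₁) × ZMod (2 ^ r₁ * w₁)) ×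
          (ZMod (2 ^ s₂ * t₂) × ZMod (2 ^ r₂ * w₂)) //
        (addOrderOf P.1).factorization 2 = (addOrderOf P.2).factorization 2} : ℚ) /
      (Nat.card ((ZMod (2 ^ s₁ * t₁) × ZMod (2 ^ r₁ * w₁)) ×
          (ZMod (2 ^ s₂ * t₂) × ZMod (2 ^ r₂ * w₂))) : ℚ)) ≤ 5 / 8 ∧
    (s₁ = 1 ∧ r₁ = 1 ∧ s₂ = 1 ∧ r₂ = 1 →
      ((Nat.card {P : (ZMod (2 ^ s₁ * t₁) × ZMod (2 ^ r₁ * w₁)) ×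
            (ZMod (2 ^ s₂ * t₂) × ZMod (2 ^ r₂ * w₂)) //
          (addOrderOf P.1).factorization 2 = (addOrderOf P.2).factorization 2} : ℚ) /
        (Nat.card ((ZMod (2 ^ s₁ * t₁) × ZMod (2 ^ r₁ * w₁)) ×
            (ZMod (2 ^ s₂ * t₂) × ZMod (2 ^ r₂ * w₂))) : ℚ)) = 5 / 8) :=
  stmt17_general s₁ r₁ t₁ w₁ s₂ r₂ t₂ w₂ ht₁ hw₁ ht₂ hw₂ h₁ h₂ hr₁
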